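/- For n not divisible by 4, the generating function α_O of Oₙ satisfies: for every nonzero x ∈ (Z₂)ⁿ there exists y ∈ (Z₂)ⁿ with β(x,y) = 1, where β(x,y) = α_O(x+y) + α_O(x) + α_O(y). Consequently the twisted group algebra Oₙ has trivial center. -/

import Mathlib

/-!
If a nonzero `x` has a one at `i` and a zero at `j`, then `y = eᵢ + eⱼ` moves that one, so
`|x + y| = |x|` and `β(x, y) = α(y) = 1` since `|y| = 2`. Otherwise `x` is the all-ones vector of
weight `n`; then `y = eᵢ` (for `n ≡ 2, 3 mod 4`) or `y = eᵢ + eⱼ` with `i ≠ j` (for `n ≡ 1 mod 4`)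
makes all of `|x + y|`, `|x|`, `|y|` nonzero mod 4, so `β(x, y) = 1 + 1 + 1 = 1`.
-/

/-- Hamming weight of x ∈ (Z₂)ⁿ. -/
def wt {n : ℕ} (x : Fin n → ZMod 2) : ℕ :=
  (Finset.univ.filter (fun i => x i = 1)).card

open Finset

lemma ZMod.two_eq_zero_or_one : ∀ a : ZMod 2, a = 0 ∨ a = 1 := by
  decide

variable {n : ℕ}

lemma wt_add_single_of_eq_zero {x : Fin n → ZMod 2} {i : Fin n} (h : x i = 0) :
    wt (x + Pi.single i 1) = wt x + 1 := by
  have hsupp : univ.filter (fun j => (x + Pi.single i 1 : Fin n → ZMod 2) j = 1) =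
      insert i (univ.filter (fun j => x j = 1)) := by
    ext j
    rcases eq_or_ne j i with rfl | hj <;> simp [*]
  rw [wt, hsupp, card_insert_of_notMem (by simp [h]), wt]

lemma wt_add_single_of_eq_one {x : Fin n → ZMod 2} {i : Fin n} (h : x i = 1) :
    wt (x + Pi.single i 1) + 1 = wt x := by
  have hsupp : univ.filter (fun j => (x + Pi.single i 1 : Fin n → ZMod 2) j = 1) =
      (univ.filter (fun j => x j = 1)).erase i := by
    ext j
    rcases eq_or_ne j i with rfl | hj <;> simp [*]
  rw [wt, hsupp, card_erase_add_one (by simp [h]), wt]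

lemma wt_zero : wt (0 : Fin n → ZMod 2) = 0 := by simp [wt]

lemma wt_single (i : Fin n) : wt (Pi.single i 1 : Fin n → ZMod 2) = 1 := by
  simpa [wt_zero] using wt_add_single_of_eq_zero (x := 0) (i := i) rfl

lemma wt_single_add_single {i j : Fin n} (hij : i ≠ j) :
    wt (Pi.single i 1 + Pi.single j 1 : Fin n → ZMod 2) = 2 := by
  rw [wt_add_single_of_eq_zero (by simp [hij]), wt_single]

lemma wt_one : wt (1 : Fin n → ZMod 2) = n := by
  simp [wt]

def alphaO (x : Fin n → ZMod 2) : ZMod 2 := if wt x % 4 = 0 then 0 else 1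

def betaO (x y : Fin n → ZMod 2) : ZMod 2 := alphaO (x + y) + alphaO x + alphaO y

lemma betaO_single_add_single {x : Fin n → ZMod 2} {i j : Fin n} (hi : x i = 1) (hj : x j = 0) :
    betaO x (Pi.single i 1 + Pi.single j 1) = 1 := by
  have hij : i ≠ j := by rintro rfl; simp [hi] at hj
  have hwt : wt (x + (Pi.single i 1 + Pi.single j 1)) = wt x := by
    have hj' : (x + Pi.single i 1 : Fin n → ZMod 2) j = 0 := by simp [hj, hij.symm]
    have := wt_add_single_of_eq_one hi
    rw [← add_assoc, wt_add_single_of_eq_zero hj']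
    omega
  simp only [betaO, alphaO, hwt, wt_single_add_single hij, if_neg (by decide : 2 % 4 ≠ 0)]
  split_ifs <;> decide

lemma betaO_one_single (h : n % 4 = 2 ∨ n % 4 = 3) (i : Fin n) :
    betaO 1 (Pi.single i 1) = 1 := by
  have := wt_add_single_of_eq_one (x := 1) (i := i) rfl
  rw [wt_one] at this
  simp only [betaO, alphaO, wt_one, wt_single]
  rw [if_neg (by omega), if_neg (by omega), if_neg (by omega)]
  decide

lemma betaO_one_single_add_single (h : n % 4 = 1) {i j : Fin n} (hij : i ≠ j) :
    betaO 1 (Pi.single i 1 + Pi.single j 1) = 1 := by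
  have hi := wt_add_single_of_eq_one (x := 1) (i := i) rfl
  have hj := wt_add_single_of_eq_one (x := 1 + Pi.single i 1) (i := j) (by simp [hij.symm])
  rw [wt_one] at hi
  simp only [betaO, alphaO, wt_one, wt_single_add_single hij, ← add_assoc]
  rw [if_neg (by omega), if_neg (by omega), if_neg (by omega)]
  decide

theorem exists_betaO_eq_one (hn : 2 ≤ n) (h4 : n % 4 ≠ 0) {x : Fin n → ZMod 2} (hx : x ≠ 0) :
    ∃ y, betaO x y = 1 := by
  obtain ⟨i, hi⟩ : ∃ i, x i = 1 := by
    by_contra! h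
    exact hx (funext fun j => (ZMod.two_eq_zero_or_one _).resolve_right (h j))
  by_cases hone : x = 1
  · subst hone
    rcases (by omega : n % 4 = 1 ∨ n % 4 = 2 ∨ n % 4 = 3) with h1 | h23
    · have : Nontrivial (Fin n) := Fin.nontrivial_iff_two_le.mpr hn
      obtain ⟨j, hji⟩ := exists_ne i
      exact ⟨_, betaO_one_single_add_single h1 hji.symm⟩
    · exact ⟨_, betaO_one_single h23 i⟩
  · obtain ⟨j, hj⟩ : ∃ j, x j = 0 := by
      by_contra! h
      exact hone (funext fun j => (ZMod.two_eq_zero_or_one _).resolve_left (h j))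
    exact ⟨_, betaO_single_add_single hi hj⟩

/-- For n not divisible by 4 (n ≥ 2), every nonzero homogeneous element of Oₙ
    anticommutes with some homogeneous element: for every x ≠ 0 there is y with
    β(x,y) = 1, where β is the polarization of the generating function α_O. -/
theorem stmt_12 (n : ℕ) (hn : 2 ≤ n) (h4 : n % 4 ≠ 0)
    (α : (Fin n → ZMod 2) → ZMod 2)
    (hα : ∀ x, α x = if wt x % 4 = 0 then 0 else 1) :
    ∀ x : Fin n → ZMod 2, x ≠ 0 →
      ∃ y : Fin n → ZMod 2, α (x + y) + α x + α y = 1 := by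
  obtain rfl : α = alphaO := funext hα
  exact fun x hx => exists_betaO_eq_one hn h4 hx
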